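/- Let 0 < β < 1, let t ∈ ℕ with 2^{-t} ≤ β/5 and let W_t be the dyadic covering of Ω from the covering lemma. Let f be a nonnegative locally integrable function, h > 0, and let Q ∈ F_β be a cube with |Q|^{-1} ∫_Q f > h and 10Q ∉ F_β. Then there exist a dyadic cube R ∈ W_t and a positive constant c₂, independent of Q, such that Q ⊂ W_{t,Q} (the union of the cubes of W_t meeting N_β(Q)) contains Q, R ∩ N_β(Q) ≠ ∅, and |R|^{-1} ∫_R f > c₂·h. -/

import Mathlib

open MeasureTheory Metric Set
open scoped ENNReal

noncomputable section

/-- The cube `Q(x,l)` with center `x` and half side length `l`, i.e. the closed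
ball of radius `l` in the sup metric `d_∞` on `Fin n → ℝ`. -/
def Cube {n : ℕ} (x : Fin n → ℝ) (l : ℝ) : Set (Fin n → ℝ) :=
  Metric.closedBall x l

/-- `Q(x,l)` belongs to the family `F_β` of cubes well inside `Ω`. -/
def MemF {n : ℕ} (Ω : Set (Fin n → ℝ)) (β : ℝ) (x : Fin n → ℝ) (l : ℝ) : Prop :=
  x ∈ Ω ∧ 0 < l ∧ l < β * Metric.infDist x Ωᶜ

/-- `w(E) = ∫_E w dx` for a weight `w`. -/
def wMeas {n : ℕ} (w : (Fin n → ℝ) → ℝ) (E : Set (Fin n → ℝ)) : ℝ≥0∞ :=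
  ∫⁻ y in E, ENNReal.ofReal (w y)

/-- The average `|Q|⁻¹ ∫_Q |f|`. -/
def avgI {n : ℕ} (f : (Fin n → ℝ) → ℝ) (Q : Set (Fin n → ℝ)) : ℝ≥0∞ :=
  (volume Q)⁻¹ * ∫⁻ y in Q, ENNReal.ofReal |f y|

/-- The local (uncentered) maximal function `M_β f`. -/
def locMax {n : ℕ} (Ω : Set (Fin n → ℝ)) (β : ℝ) (f : (Fin n → ℝ) → ℝ)
    (x : Fin n → ℝ) : ℝ≥0∞ :=
  ⨆ (c : Fin n → ℝ) (l : ℝ) (_ : MemF Ω β c l) (_ : x ∈ Cube c l), avgI f (Cube c l)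

/-- The centered local maximal function `M_β^c f`. -/
def locMaxC {n : ℕ} (Ω : Set (Fin n → ℝ)) (β : ℝ) (f : (Fin n → ℝ) → ℝ)
    (x : Fin n → ℝ) : ℝ≥0∞ :=
  ⨆ (l : ℝ) (_ : MemF Ω β x l), avgI f (Cube x l)

/-- A weight: a nonnegative (measurable) locally integrable function on `Ω`. -/
def IsWeight {n : ℕ} (Ω : Set (Fin n → ℝ)) (w : (Fin n → ℝ) → ℝ) : Prop :=
  (∀ x, 0 ≤ w x) ∧ Measurable w ∧ LocallyIntegrableOn w Ω

/-- `σ = v^{1-p'} = v^{-1/(p-1)}`. -/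
def sigW {n : ℕ} (v : (Fin n → ℝ) → ℝ) (p : ℝ) : (Fin n → ℝ) → ℝ :=
  fun y => v y ^ (-(1 / (p - 1)))

/-- The class `A_{p,q}^β`: `(u(Q)/|Q|)^{p/q} (σ(Q)/|Q|)^{p-1} ≤ C` for `Q ∈ F_β`. -/
def Apq {n : ℕ} (Ω : Set (Fin n → ℝ)) (β p q : ℝ) (u v : (Fin n → ℝ) → ℝ) : Prop :=
  ∃ C : ℝ≥0∞, C ≠ ⊤ ∧ ∀ x l, MemF Ω β x l →
    (wMeas u (Cube x l) / volume (Cube x l)) ^ (p / q) *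
      (wMeas (sigW v p) (Cube x l) / volume (Cube x l)) ^ (p - 1) ≤ C

/-- The class `D_β`: `w(2Q) ≤ C w(Q) < ∞` for all `Q ∈ F_β` with `2Q ∈ F_β`. -/
def Dbeta {n : ℕ} (Ω : Set (Fin n → ℝ)) (β : ℝ) (w : (Fin n → ℝ) → ℝ) : Prop :=
  ∃ C : ℝ≥0∞, C ≠ ⊤ ∧ ∀ x l, MemF Ω β x l → MemF Ω β x (2 * l) →
    wMeas w (Cube x (2 * l)) ≤ C * wMeas w (Cube x l) ∧ wMeas w (Cube x l) < ⊤

/-- The class `A_∞^β`: `w(E)/w(Q) ≤ c (|E|/|Q|)^δ` for measurable `E ⊆ Q ∈ F_β`. -/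
def AinfB {n : ℕ} (Ω : Set (Fin n → ℝ)) (β : ℝ) (w : (Fin n → ℝ) → ℝ) : Prop :=
  ∃ c δ : ℝ, 0 < c ∧ 0 < δ ∧ ∀ x l, MemF Ω β x l → ∀ E : Set (Fin n → ℝ),
    MeasurableSet E → E ⊆ Cube x l →
    wMeas w E ≤ ENNReal.ofReal c * (volume E / volume (Cube x l)) ^ δ * wMeas w (Cube x l)

/-- `M_β : L^p(v) → L^q(u)` is bounded. -/
def MaxBdd {n : ℕ} (Ω : Set (Fin n → ℝ)) (β p q : ℝ) (u v : (Fin n → ℝ) → ℝ) : Prop :=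
  ∃ C : ℝ≥0∞, C ≠ ⊤ ∧ ∀ f : (Fin n → ℝ) → ℝ,
    (∫⁻ x in Ω, (locMax Ω β f x) ^ q * ENNReal.ofReal (u x)) ^ (1 / q)
      ≤ C * (∫⁻ x in Ω, ENNReal.ofReal |f x| ^ p * ENNReal.ofReal (v x)) ^ (1 / p)

/-- `M_β^c : L^p(v) → L^q(u)` is bounded. -/
def MaxCBdd {n : ℕ} (Ω : Set (Fin n → ℝ)) (β p q : ℝ) (u v : (Fin n → ℝ) → ℝ) : Prop :=
  ∃ C : ℝ≥0∞, C ≠ ⊤ ∧ ∀ f : (Fin n → ℝ) → ℝ,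
    (∫⁻ x in Ω, (locMaxC Ω β f x) ^ q * ENNReal.ofReal (u x)) ^ (1 / q)
      ≤ C * (∫⁻ x in Ω, ENNReal.ofReal |f x| ^ p * ENNReal.ofReal (v x)) ^ (1 / p)

/-- The cloud `N_β(Q)` of the cube `Q = Q(x,l)`. -/
def cloud {n : ℕ} (Ω : Set (Fin n → ℝ)) (β : ℝ) (x : Fin n → ℝ) (l : ℝ) :
    Set (Fin n → ℝ) :=
  ⋃ (c : Fin n → ℝ) (r : ℝ) (_ : MemF Ω β c r)
    (_ : (Cube c r ∩ Cube x l).Nonempty), Cube c r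

/-- The center of the usual dyadic cube of side `2^(k+1)` indexed by `z`. -/
def dyCenter {n : ℕ} (k : ℤ) (z : Fin n → ℤ) : Fin n → ℝ :=
  fun i => (2 * (z i : ℝ) + 1) * (2:ℝ) ^ k

/-- The usual (half-open) dyadic cube of side `2^(k+1)` indexed by `z`;
its center is `dyCenter k z` and its half side length is `2^k`. -/
def dyCube {n : ℕ} (k : ℤ) (z : Fin n → ℤ) : Set (Fin n → ℝ) :=
  Set.univ.pi fun i => Ico ((z i : ℝ) * 2 ^ (k + 1)) (((z i : ℝ) + 1) * 2 ^ (k + 1))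

/-- `Q(x,l)` is a usual dyadic cube of `ℝ^n`. -/
def IsDyadic {n : ℕ} (x : Fin n → ℝ) (l : ℝ) : Prop :=
  ∃ (k : ℤ) (z : Fin n → ℤ), l = (2:ℝ) ^ k ∧ x = dyCenter k z

/-- `W` is a covering `W_t` of `Ω` as in the covering lemma: a covering of `Ω`
by pairwise disjoint dyadic cubes `R ∈ F_β` with `10R ∈ F_β` and
`2^{-t-3} d(x_R,Ω^c) ≤ l_R ≤ 2^{-t-1} d(x_R,Ω^c)`, and such that at most `M`
cubes of `W` meet the cloud of any `Q ∈ F_β` with `10Q ∉ F_β`. -/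
def IsWt {n : ℕ} (Ω : Set (Fin n → ℝ)) (β : ℝ) (t : ℕ)
    (W : Set (ℤ × (Fin n → ℤ))) : Prop :=
  (Ω ⊆ ⋃ q ∈ W, dyCube q.1 q.2) ∧
  (W.PairwiseDisjoint fun q => dyCube q.1 q.2) ∧
  (∀ q ∈ W, MemF Ω β (dyCenter q.1 q.2) ((2:ℝ) ^ q.1) ∧
    MemF Ω β (dyCenter q.1 q.2) (10 * (2:ℝ) ^ q.1) ∧
    (2:ℝ) ^ (-(t:ℤ) - 3) * Metric.infDist (dyCenter q.1 q.2) Ωᶜ ≤ (2:ℝ) ^ q.1 ∧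
    (2:ℝ) ^ q.1 ≤ (2:ℝ) ^ (-(t:ℤ) - 1) * Metric.infDist (dyCenter q.1 q.2) Ωᶜ) ∧
  (∃ M : ℕ, ∀ x l, MemF Ω β x l → ¬ MemF Ω β x (10 * l) →
    {q ∈ W | (dyCube q.1 q.2 ∩ cloud Ω β x l).Nonempty}.Finite ∧
    {q ∈ W | (dyCube q.1 q.2 ∩ cloud Ω β x l).Nonempty}.ncard ≤ M)

/-- `W_{t,Q}`: the union of the cubes of `W` meeting the cloud of `Q = Q(x,l)`. -/
def WtQ {n : ℕ} (Ω : Set (Fin n → ℝ)) (β : ℝ) (W : Set (ℤ × (Fin n → ℤ)))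
    (x : Fin n → ℝ) (l : ℝ) : Set (Fin n → ℝ) :=
  ⋃ q ∈ {q ∈ W | (dyCube q.1 q.2 ∩ cloud Ω β x l).Nonempty}, dyCube q.1 q.2

/-!
A cube `R ∈ W_t` through a point `y` has half side at most `d(y, Ωᶜ)`, and on the cloud of
`Q = Q(x,l)` the distance `d(y, Ωᶜ)` is controlled by `d(x, Ωᶜ) + l`, which is `O(l)` once
`10Q ∉ F_β`. Hence the cubes of `W_t` meeting `N_β(Q)` have volume at most `A^n |Q|` with `A`
depending only on `β`; they cover `Q` and there are at most `M` of them, so one of them must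
carry an average of `|f|` larger than `h / ((M + 1) A^n)`.
-/

section LIntegral

variable {α ι : Type*} [MeasurableSpace α] {μ : Measure α}

theorem setLIntegral_biUnion_finset_le (s : Finset ι) (t : ι → Set α) (f : α → ℝ≥0∞) :
    ∫⁻ a in ⋃ i ∈ s, t i, f a ∂μ ≤ ∑ i ∈ s, ∫⁻ a in t i, f a ∂μ := by
  classical
  induction s using Finset.induction_on with
  | empty => simp
  | insert i s hi ih =>
    rw [Finset.set_biUnion_insert, Finset.sum_insert hi]
    exact (lintegral_union_le _ _ _).trans (by gcongr)

theorem setLIntegral_le_card_mul_of_subset_biUnion {E : Set α} {s : Finset ι} {t : ι → Set α}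
    (hE : E ⊆ ⋃ i ∈ s, t i) {f : α → ℝ≥0∞} {b : ℝ≥0∞}
    (hb : ∀ i ∈ s, ∫⁻ a in t i, f a ∂μ ≤ b) :
    ∫⁻ a in E, f a ∂μ ≤ s.card * b :=
  calc ∫⁻ a in E, f a ∂μ ≤ ∫⁻ a in ⋃ i ∈ s, t i, f a ∂μ := lintegral_mono_set hE
    _ ≤ ∑ i ∈ s, ∫⁻ a in t i, f a ∂μ := setLIntegral_biUnion_finset_le s t f
    _ ≤ s.card • b := Finset.sum_le_card_nsmul _ _ _ hb
    _ = s.card * b := nsmul_eq_mul _ _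

end LIntegral

variable {n : ℕ}

section Averages

variable {f : (Fin n → ℝ) → ℝ}

theorem lintegral_le_volume_mul_avgI {R : Set (Fin n → ℝ)} (hR : volume R ≠ ∞) :
    ∫⁻ y in R, ENNReal.ofReal |f y| ≤ volume R * avgI f R := by
  by_cases hR0 : volume R = 0
  · simp [Measure.restrict_eq_zero.mpr hR0]
  · rw [avgI, ENNReal.mul_inv_cancel_left hR0 hR]

theorem volume_mul_lt_lintegral_of_lt_avgI {Q : Set (Fin n → ℝ)} {a : ℝ≥0∞}
    (ha : a < avgI f Q) :
    volume Q * a < ∫⁻ y in Q, ENNReal.ofReal |f y| := by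
  rw [avgI, ← ENNReal.div_eq_inv_mul] at ha
  exact ENNReal.mul_lt_of_lt_div' ha

theorem exists_lt_avgI_of_subset_biUnion {ι : Type*} {E : Set (Fin n → ℝ)} {s : Finset ι}
    {R : ι → Set (Fin n → ℝ)} (hE : E ⊆ ⋃ i ∈ s, R i) {M : ℕ} (hs : s.card ≤ M) {B : ℝ}
    (hB : 0 < B) (hRE : ∀ i ∈ s, volume (R i) ≤ ENNReal.ofReal B * volume E)
    (hE_fin : volume E ≠ ∞) {a : ℝ} (ha : 0 ≤ a) (havg : ENNReal.ofReal a < avgI f E) :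
    ∃ i ∈ s, ENNReal.ofReal (1 / ((M + 1) * B) * a) < avgI f (R i) := by
  by_contra! hle
  set c := 1 / ((M + 1) * B) * a with hc
  have hMc : (M : ℝ≥0∞) * (ENNReal.ofReal B * ENNReal.ofReal c) ≤ ENNReal.ofReal a := by
    rw [← ENNReal.ofReal_mul hB.le, ← ENNReal.ofReal_natCast, ← ENNReal.ofReal_mul M.cast_nonneg]
    refine ENNReal.ofReal_le_ofReal ?_
    calc (M : ℝ) * (B * c) = M / (M + 1) * a := by rw [hc]; field_simp
      _ ≤ a := mul_le_of_le_one_left ha ((div_le_one (by positivity)).2 (by linarith))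
  refine (volume_mul_lt_lintegral_of_lt_avgI havg).not_ge ?_
  calc ∫⁻ y in E, ENNReal.ofReal |f y|
      ≤ s.card * (ENNReal.ofReal B * volume E * ENNReal.ofReal c) :=
        setLIntegral_le_card_mul_of_subset_biUnion hE fun i hi =>
          (lintegral_le_volume_mul_avgI
            ((hRE i hi).trans_lt (ENNReal.mul_lt_top ENNReal.ofReal_lt_top hE_fin.lt_top)).ne).trans
            (mul_le_mul' (hRE i hi) (hle i hi))
    _ ≤ M * (ENNReal.ofReal B * volume E * ENNReal.ofReal c) := by gcongr
    _ = volume E * (M * (ENNReal.ofReal B * ENNReal.ofReal c)) := by ring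
    _ ≤ volume E * ENNReal.ofReal a := by gcongr

end Averages

section Cubes

theorem two_zpow_add_one (k : ℤ) : (2 : ℝ) ^ (k + 1) = 2 * 2 ^ k := by
  rw [zpow_add_one₀ two_ne_zero, mul_comm]

theorem dyCube_subset_cube (k : ℤ) (z : Fin n → ℤ) :
    dyCube k z ⊆ Cube (dyCenter k z) ((2 : ℝ) ^ k) := by
  intro y hy
  simp only [dyCube, Set.mem_univ_pi, two_zpow_add_one] at hy
  rw [Cube, mem_closedBall, dist_pi_le_iff (zpow_pos two_pos k).le]
  intro i
  rw [Real.dist_eq, abs_le, dyCenter]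
  constructor <;> linarith [(hy i).1, (hy i).2]

theorem volume_cube (x : Fin n → ℝ) {l : ℝ} (hl : 0 ≤ l) :
    volume (Cube x l) = ENNReal.ofReal (2 * l) ^ n := by
  simp [Cube, closedBall_pi x hl, volume_pi_pi, Real.volume_closedBall]

theorem volume_dyCube (k : ℤ) (z : Fin n → ℤ) :
    volume (dyCube k z) = ENNReal.ofReal (2 * 2 ^ k) ^ n := by
  simp_rw [dyCube, volume_pi_pi, Real.volume_Ico, add_one_mul, add_sub_cancel_left,
    two_zpow_add_one, Finset.prod_const, Finset.card_univ, Fintype.card_fin]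

theorem volume_dyCube_le {k : ℤ} (z : Fin n → ℤ) (x : Fin n → ℝ) {l A : ℝ} (hA : 0 ≤ A)
    (hl : 0 ≤ l) (hk : (2 : ℝ) ^ k ≤ A * l) :
    volume (dyCube k z) ≤ ENNReal.ofReal (A ^ n) * volume (Cube x l) := by
  rw [volume_dyCube, volume_cube x hl, ENNReal.ofReal_pow hA, ← mul_pow, ← ENNReal.ofReal_mul hA]
  exact pow_le_pow_left' (ENNReal.ofReal_le_ofReal (by linarith)) n

end Cubes

section Geometry

variable {Ω : Set (Fin n → ℝ)} {β : ℝ}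

theorem mem_cloud {x y : Fin n → ℝ} {l : ℝ} :
    y ∈ cloud Ω β x l ↔
      ∃ c r, MemF Ω β c r ∧ (Cube c r ∩ Cube x l).Nonempty ∧ y ∈ Cube c r := by
  simp only [cloud, mem_iUnion, exists_prop]

theorem cube_subset_cloud {x c : Fin n → ℝ} {l r : ℝ} (hcr : MemF Ω β c r)
    (hne : (Cube c r ∩ Cube x l).Nonempty) : Cube c r ⊆ cloud Ω β x l :=
  fun _ hy => mem_cloud.2 ⟨c, r, hcr, hne, hy⟩

theorem MemF.cube_subset {x : Fin n → ℝ} {l : ℝ} (h : MemF Ω β x l) (hβ : β ≤ 1) :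
    Cube x l ⊆ Ω :=
  (closedBall_subset_ball (h.2.2.trans_le (mul_le_of_le_one_left infDist_nonneg hβ))).trans
    ball_infDist_compl_subset

theorem mul_infDist_le_of_not_memF {x : Fin n → ℝ} {l : ℝ} (hx : x ∈ Ω) (hl : 0 < l)
    (h : ¬ MemF Ω β x l) : β * infDist x Ωᶜ ≤ l :=
  not_lt.1 fun hlt => h ⟨hx, hl, hlt⟩

theorem infDist_compl_le_of_mem_cloud (hβ : β ≤ 1) {x y : Fin n → ℝ} {l : ℝ}
    (hy : y ∈ cloud Ω β x l) : (1 - β) * infDist y Ωᶜ ≤ (1 + β) * (infDist x Ωᶜ + l) := by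
  obtain ⟨c, r, ⟨-, hr, hrc⟩, ⟨z, hzc, hzx⟩, hyc⟩ := mem_cloud.1 hy
  rw [Cube, mem_closedBall] at hzc hzx hyc
  have hc : infDist c Ωᶜ ≤ infDist x Ωᶜ + l + r := by
    linarith [infDist_le_infDist_add_dist (x := c) (y := z) (s := Ωᶜ),
      infDist_le_infDist_add_dist (x := z) (y := x) (s := Ωᶜ), dist_comm c z]
  have hy : infDist y Ωᶜ ≤ infDist c Ωᶜ + r :=
    infDist_le_infDist_add_dist.trans (by gcongr)
  have hβ0 : 0 < β := pos_of_mul_pos_left (hr.trans hrc) infDist_nonneg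
  calc (1 - β) * infDist y Ωᶜ ≤ (1 - β) * ((1 + β) * infDist c Ωᶜ) := by gcongr; linarith
    _ = (1 + β) * ((1 - β) * infDist c Ωᶜ) := by ring
    _ ≤ (1 + β) * (infDist x Ωᶜ + l) := by gcongr; linarith

end Geometry

section Covering

variable {Ω : Set (Fin n → ℝ)} {β : ℝ} {t : ℕ} {W : Set (ℤ × (Fin n → ℤ))}

theorem IsWt.zpow_le_infDist (hW : IsWt Ω β t W) {q : ℤ × (Fin n → ℤ)} (hq : q ∈ W)
    {y : Fin n → ℝ} (hy : y ∈ dyCube q.1 q.2) : (2 : ℝ) ^ q.1 ≤ infDist y Ωᶜ := by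
  have hR := (hW.2.2.1 q hq).2.2.2
  have hyR : dist y (dyCenter q.1 q.2) ≤ 2 ^ q.1 := dyCube_subset_cube q.1 q.2 hy
  have ht : (2 : ℝ) ^ (-(t : ℤ) - 1) ≤ 2⁻¹ :=
    (zpow_le_zpow_right₀ one_le_two (by omega)).trans_eq (zpow_neg_one 2)
  have hd := infDist_le_infDist_add_dist (x := dyCenter q.1 q.2) (y := y) (s := Ωᶜ)
  rw [dist_comm] at hd
  nlinarith [infDist_nonneg (x := dyCenter q.1 q.2) (s := Ωᶜ)]

theorem IsWt.exists_zpow_le_mul_of_inter_cloud_nonempty (hW : IsWt Ω β t W) (hβ0 : 0 < β)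
    (hβ1 : β < 1) :
    ∃ A > 0, ∀ x l, MemF Ω β x l → ¬ MemF Ω β x (10 * l) → ∀ q ∈ W,
      (dyCube q.1 q.2 ∩ cloud Ω β x l).Nonempty → (2 : ℝ) ^ q.1 ≤ A * l := by
  have hβ' : 0 < β * (1 - β) := mul_pos hβ0 (by linarith)
  refine ⟨(1 + β) * (10 + β) / (β * (1 - β)), by positivity, ?_⟩
  rintro x l ⟨hx, hl, -⟩ h10 q hq ⟨y, hyR, hyN⟩
  have hR := hW.zpow_le_infDist hq hyR
  have hy := infDist_compl_le_of_mem_cloud hβ1.le hyN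
  have hx10 := mul_infDist_le_of_not_memF hx (by positivity) h10
  rw [div_mul_eq_mul_div, le_div_iff₀ hβ']
  calc (2 : ℝ) ^ q.1 * (β * (1 - β)) ≤ β * ((1 - β) * infDist y Ωᶜ) := by nlinarith
    _ ≤ β * ((1 + β) * (infDist x Ωᶜ + l)) := by gcongr
    _ = (1 + β) * (β * infDist x Ωᶜ + β * l) := by ring
    _ ≤ (1 + β) * (10 + β) * l := by nlinarith

theorem IsWt.cube_subset_WtQ (hW : IsWt Ω β t W) (hβ : β ≤ 1) {x : Fin n → ℝ} {l : ℝ}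
    (hQ : MemF Ω β x l) : Cube x l ⊆ WtQ Ω β W x l := by
  intro y hy
  obtain ⟨q, hq, hyR⟩ := mem_iUnion₂.1 (hW.1 (hQ.cube_subset hβ hy))
  have hyR' := dyCube_subset_cube q.1 q.2 hyR
  exact mem_biUnion ⟨hq, y, hyR, cube_subset_cloud (hW.2.2.1 q hq).1 ⟨y, hyR', hy⟩ hyR'⟩ hyR

end Covering

theorem calderon_zygmund_selection_boundary_general {n : ℕ} (Ω : Set (Fin n → ℝ))
    (β : ℝ) (hβ0 : 0 < β) (hβ1 : β < 1)
    (t : ℕ)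
    (W : Set (ℤ × (Fin n → ℤ))) (hW : IsWt Ω β t W)
    (f : (Fin n → ℝ) → ℝ)
    (h : ℝ) (hh : 0 < h) :
    ∃ c₂ : ℝ, 0 < c₂ ∧
      ∀ x l, MemF Ω β x l → ¬ MemF Ω β x (10 * l) →
        ENNReal.ofReal h < avgI f (Cube x l) →
        Cube x l ⊆ WtQ Ω β W x l ∧
        ∃ q ∈ W, (dyCube q.1 q.2 ∩ cloud Ω β x l).Nonempty ∧
          ENNReal.ofReal (c₂ * h) < avgI f (dyCube q.1 q.2) := by
  obtain ⟨A, hA, hside⟩ := hW.exists_zpow_le_mul_of_inter_cloud_nonempty hβ0 hβ1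
  obtain ⟨M, hM⟩ := hW.2.2.2
  refine ⟨1 / ((M + 1) * A ^ n), by positivity,
    fun x l hQ h10 havg => ⟨hW.cube_subset_WtQ hβ1.le hQ, ?_⟩⟩
  obtain ⟨hfin, hcard⟩ := hM x l hQ h10
  have hRQ (q) (hq : q ∈ hfin.toFinset) :
      volume (dyCube q.1 q.2) ≤ ENNReal.ofReal (A ^ n) * volume (Cube x l) := by
    rw [hfin.mem_toFinset] at hq
    exact volume_dyCube_le q.2 x hA.le hQ.2.1.le (hside x l hQ h10 q hq.1 hq.2)
  obtain ⟨q, hq, hq_avg⟩ := exists_lt_avgI_of_subset_biUnion (E := Cube x l)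
    (R := fun q => dyCube q.1 q.2)
    (by simpa only [WtQ, Set.Finite.mem_toFinset] using hW.cube_subset_WtQ hβ1.le hQ)
    ((Set.ncard_eq_toFinset_card _ hfin).symm.trans_le hcard) (by positivity) hRQ
    measure_closedBall_lt_top.ne hh.le havg
  rw [hfin.mem_toFinset] at hq
  exact ⟨q, hq.1, hq.2, hq_avg⟩

/-- Lemma 2.7 (ii): if `|Q|⁻¹∫_Q f > h` and `10Q ∉ F_β`, then
`Q ⊆ W_{t,Q}` and there is a cube `R ∈ W_t` meeting `N_β(Q)` with
`|R|⁻¹∫_R f > c₂ h`, the constant `c₂ > 0` being independent of `Q`. -/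
theorem calderon_zygmund_selection_boundary {n : ℕ} (Ω : Set (Fin n → ℝ))
    (hΩo : IsOpen Ω) (hΩne : Ω.Nonempty) (hΩpr : Ω ≠ Set.univ)
    (β : ℝ) (hβ0 : 0 < β) (hβ1 : β < 1)
    (t : ℕ) (ht : (2:ℝ) ^ (-(t:ℤ)) ≤ β / 5)
    (W : Set (ℤ × (Fin n → ℤ))) (hW : IsWt Ω β t W)
    (f : (Fin n → ℝ) → ℝ) (hf0 : ∀ y, 0 ≤ f y)
    (hfl : LocallyIntegrableOn f Ω)
    (h : ℝ) (hh : 0 < h) :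
    ∃ c₂ : ℝ, 0 < c₂ ∧
      ∀ x l, MemF Ω β x l → ¬ MemF Ω β x (10 * l) →
        ENNReal.ofReal h < avgI f (Cube x l) →
        Cube x l ⊆ WtQ Ω β W x l ∧
        ∃ q ∈ W, (dyCube q.1 q.2 ∩ cloud Ω β x l).Nonempty ∧
          ENNReal.ofReal (c₂ * h) < avgI f (dyCube q.1 q.2) :=
  calderon_zygmund_selection_boundary_general Ω β hβ0 hβ1 t W hW f h hh
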